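/- Let S be a maximal common independent set of matroids M1, M2, and let D2 ⊆ S be the set of elements at distance 2 from s in the exchange graph G(S). For u ∈ S: u ∈ D2 if and only if rank_{M2}(S + D1 − u) ≥ rank_{M2}(S), where D1 = {v ∈ V∖S : S + v ∈ I1}. -/

import Mathlib

open Set

variable {α : Type*}

/-- Vertices of the exchange graph: `Sum.inl v` is an element of the ground set,
`Sum.inr false` is the source `s`, `Sum.inr true` is the sink `t`. -/
abbrev ExV (α : Type*) := α ⊕ Bool

/-- Adjacency in the exchange graph `G(S)` of the common independent set `S`. -/
def exAdj (M₁ M₂ : Matroid α) (S : Set α) : ExV α → ExV α → Prop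
  | Sum.inl u, Sum.inl v =>
      (u ∈ S ∧ v ∉ S ∧ M₁.Indep (insert v (S \ {u}))) ∨
      (u ∉ S ∧ v ∈ S ∧ M₂.Indep (insert u (S \ {v})))
  | Sum.inr false, Sum.inl v => v ∉ S ∧ M₁.Indep (insert v S)
  | Sum.inl v, Sum.inr true => v ∉ S ∧ M₂.Indep (insert v S)
  | _, _ => False

/-- `l` is an `(s,t)`-path (list of vertices) in the exchange graph `G(S)`.
Its length (number of edges) is `l.length - 1`. -/
def IsSTPath (M₁ M₂ : Matroid α) (S : Set α) (l : List (ExV α)) : Prop :=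
  l.Chain' (exAdj M₁ M₂ S) ∧ l.head? = some (Sum.inr false) ∧
    l.getLast? = some (Sum.inr true)

/-- `l` is a path from `s` to the element `v` in the exchange graph `G(S)`. -/
def IsSPathTo (M₁ M₂ : Matroid α) (S : Set α) (v : α) (l : List (ExV α)) : Prop :=
  l.Chain' (exAdj M₁ M₂ S) ∧ l.head? = some (Sum.inr false) ∧
    l.getLast? = some (Sum.inl v)

/-- `v` is at distance exactly `i` from `s` in the exchange graph `G(S)`;
i.e. `v ∈ D_i`. -/
def InLayer (M₁ M₂ : Matroid α) (S : Set α) (i : ℕ) (v : α) : Prop :=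
  (∃ l, IsSPathTo M₁ M₂ S v l ∧ l.length = i + 1) ∧
    ∀ l, IsSPathTo M₁ M₂ S v l → i + 1 ≤ l.length

/-- Shortest `(s,t)`-paths in `G(S)` have length exactly `4`. -/
def ShortestAugLenFour (M₁ M₂ : Matroid α) (S : Set α) : Prop :=
  (∃ l, IsSTPath M₁ M₂ S l ∧ l.length = 5) ∧
    ∀ l, IsSTPath M₁ M₂ S l → 5 ≤ l.length

/-- `(B₁, A₁, B₂)` is an augmenting set in `G(S)`. -/
def IsAugSet (M₁ M₂ : Matroid α) (S B₁ A₁ B₂ : Set α) : Prop :=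
  (∀ v ∈ B₁, InLayer M₁ M₂ S 1 v) ∧ (∀ v ∈ A₁, InLayer M₁ M₂ S 2 v) ∧
  (∀ v ∈ B₂, InLayer M₁ M₂ S 3 v) ∧
  B₁.ncard = A₁.ncard ∧ A₁.ncard = B₂.ncard ∧
  M₁.Indep (S ∪ B₁) ∧ M₂.Indep ((S ∪ B₁) \ A₁) ∧
  M₁.Indep ((S \ A₁) ∪ B₂) ∧ M₂.Indep (S ∪ B₂)

/-- The rank of a set `X` in a matroid `M`: the maximum size of an independent
subset of `X`. -/
noncomputable def mRank (M : Matroid α) (X : Set α) : ℕ :=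
  sSup {n | ∃ I, I ⊆ X ∧ M.Indep I ∧ I.ncard = n}

/-!
`u ∈ D₂` exactly when some `v ∈ D₁` has `S - u + v ∈ I₂`: a shortest `s`–`u` path is `s → v → u`.
As `r₂(S) = r₂(S - u) + 1`, the rank inequality says `r₂(S - u + D₁) > r₂(S - u)`, i.e. that the
independent set `S - u` extends by an element of `S - u + D₁`, necessarily one of `D₁`. All ranks
involved are finite, so `mRank` agrees with `Matroid.eRk` there.
-/

namespace Matroid

lemma mRank_eq_eRk {M : Matroid α} {X : Set α} (hX : M.IsRkFinite X) :
    (mRank M X : ℕ∞) = M.eRk X := by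
  obtain ⟨I, hIX, hIfin⟩ := hX.exists_finite_isBasis'
  have hmax : IsGreatest {n | ∃ J, J ⊆ X ∧ M.Indep J ∧ J.ncard = n} I.ncard := by
    refine ⟨⟨I, hIX.subset, hIX.indep, rfl⟩, ?_⟩
    rintro _ ⟨J, hJX, hJ, rfl⟩
    have hJI := hJ.encard_le_eRk_of_subset hJX
    rw [hIX.eRk_eq_encard, ← (hX.finite_of_indep_subset hJ hJX).cast_ncard_eq,
      ← hIfin.cast_ncard_eq] at hJI
    exact_mod_cast hJI
  rw [mRank, hmax.csSup_eq, hIfin.cast_ncard_eq, hIX.eRk_eq_encard]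

lemma Indep.eRk_lt_eRk_iff_exists_insert_indep {M : Matroid α} {I X : Set α} (hI : M.Indep I)
    (hIfin : I.Finite) (hIX : I ⊆ X) :
    M.eRk I < M.eRk X ↔ ∃ x ∈ X \ I, M.Indep (insert x I) := by
  constructor
  · intro hlt
    obtain ⟨x, hx, hrk⟩ := exists_eRk_insert_eq_add_one_of_lt hlt
    refine ⟨x, hx, (indep_iff_eRk_eq_encard_of_finite (hIfin.insert x)).2 ?_⟩
    rw [hrk, hI.eRk_eq_encard, encard_insert_of_notMem hx.2]
  · rintro ⟨x, hx, hxI⟩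
    calc M.eRk I = I.encard := hI.eRk_eq_encard
      _ < (insert x I).encard := hIfin.encard_lt_encard (ssubset_insert hx.2)
      _ = M.eRk (insert x I) := hxI.eRk_eq_encard.symm
      _ ≤ M.eRk X := M.eRk_mono (insert_subset hx.1 hIX)

end Matroid

section ExchangeGraph

variable {M₁ M₂ : Matroid α} {S : Set α} {u : α}

lemma three_le_length_of_isSPathTo (hu : u ∈ S) {l : List (ExV α)}
    (hl : IsSPathTo M₁ M₂ S u l) : 3 ≤ l.length := by
  obtain ⟨hchain : l.IsChain (exAdj M₁ M₂ S), hhead, hlast⟩ := hl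
  match l with
  | [] => simp at hhead
  | [_] => simp_all
  | [_, _] =>
    simp only [List.head?, List.getLast?, Option.some_inj] at hhead hlast
    subst hhead hlast
    simp [exAdj, hu] at hchain
  | _ :: _ :: _ :: _ => simp

lemma exists_isSPathTo_length_three_iff (hu : u ∈ S) :
    (∃ l, IsSPathTo M₁ M₂ S u l ∧ l.length = 3) ↔
      ∃ v, v ∉ S ∧ M₁.Indep (insert v S) ∧ M₂.Indep (insert v (S \ {u})) := by
  constructor
  · rintro ⟨l, ⟨hchain : l.IsChain (exAdj M₁ M₂ S), hhead, hlast⟩, hlen⟩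
    obtain ⟨a, b, c, rfl⟩ := List.length_eq_three.1 hlen
    simp only [List.head?, List.getLast?, Option.some_inj] at hhead hlast
    subst hhead hlast
    simp only [List.isChain_cons_cons, List.isChain_singleton, and_true] at hchain
    obtain ⟨hsb, hbu⟩ := hchain
    match b with
    | Sum.inl v =>
      simp only [exAdj] at hsb hbu
      exact ⟨v, hsb.1, hsb.2, hbu.resolve_left (fun h ↦ hsb.1 h.1) |>.2.2⟩
    | Sum.inr b => cases b <;> simp [exAdj] at hsb
  · rintro ⟨v, hv, h₁, h₂⟩
    refine ⟨[Sum.inr false, Sum.inl v, Sum.inl u], ⟨?_, rfl, rfl⟩, rfl⟩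
    show List.IsChain _ _
    simp only [List.isChain_cons_cons, List.isChain_singleton, and_true]
    exact ⟨⟨hv, h₁⟩, Or.inr ⟨hv, hu, h₂⟩⟩

lemma inLayer_two_iff (hu : u ∈ S) :
    InLayer M₁ M₂ S 2 u ↔
      ∃ v, v ∉ S ∧ M₁.Indep (insert v S) ∧ M₂.Indep (insert v (S \ {u})) := by
  rw [← exists_isSPathTo_length_three_iff hu]
  exact ⟨fun h ↦ h.1, fun h ↦ ⟨h, fun _ hl ↦ three_le_length_of_isSPathTo hu hl⟩⟩

end ExchangeGraph

theorem layer_two_rank_characterization_general {α : Type*} (M₁ M₂ : Matroid α)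
    (hfin : M₁.E.Finite)
    (S : Set α) (hS₁ : M₁.Indep S) (hS₂ : M₂.Indep S)
    (u : α) (hu : u ∈ S) :
    InLayer M₁ M₂ S 2 u ↔
      mRank M₂ S ≤ mRank M₂ ((S \ {u}) ∪ {v | v ∉ S ∧ M₁.Indep (insert v S)}) := by
  set D₁ := {v | v ∉ S ∧ M₁.Indep (insert v S)}
  have hSfin : S.Finite := hfin.subset hS₁.subset_ground
  have hD₁fin : D₁.Finite := hfin.subset fun v hv ↦ hv.2.subset_ground (mem_insert v S)
  have hdisj : Disjoint D₁ (S \ {u}) := disjoint_left.2 fun v hv hvS ↦ hv.1 hvS.1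
  have hrkS : M₂.eRk S = M₂.eRk (S \ {u}) + 1 := by
    rw [hS₂.eRk_eq_encard, (hS₂.sdiff {u}).eRk_eq_encard, encard_sdiff_singleton_add_one hu]
  rw [inLayer_two_iff hu, ← Nat.cast_le (α := ℕ∞),
    Matroid.mRank_eq_eRk (M₂.isRkFinite_of_finite hSfin),
    Matroid.mRank_eq_eRk (M₂.isRkFinite_of_finite (hSfin.sdiff.union hD₁fin)), hrkS,
    ENat.add_one_le_iff (M₂.isRkFinite_of_finite hSfin.sdiff).eRk_lt_top.ne,
    (hS₂.sdiff {u}).eRk_lt_eRk_iff_exists_insert_indep hSfin.sdiff subset_union_left,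
    union_sdiff_left, hdisj.sdiff_eq_left]
  simp only [D₁, mem_ofPred_eq, and_assoc]

/-- For a maximal common independent set `S` and `u ∈ S`: `u` is at distance `2`
from `s` in `G(S)` iff `rank_{M₂}(S + D₁ - u) ≥ rank_{M₂}(S)`, where
`D₁ = {v ∉ S : S + v ∈ I₁}`. -/
theorem layer_two_rank_characterization {α : Type*} (M₁ M₂ : Matroid α)
    (hE : M₂.E = M₁.E) (hfin : M₁.E.Finite)
    (S : Set α) (hS₁ : M₁.Indep S) (hS₂ : M₂.Indep S)
    (hSmax : ∀ v, M₁.Indep (insert v S) → M₂.Indep (insert v S) → v ∈ S)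
    (u : α) (hu : u ∈ S) :
    InLayer M₁ M₂ S 2 u ↔
      mRank M₂ S ≤ mRank M₂ ((S \ {u}) ∪ {v | v ∉ S ∧ M₁.Indep (insert v S)}) :=
  layer_two_rank_characterization_general M₁ M₂ hfin S hS₁ hS₂ u hu
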